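/- Let 0 < p < 1 and let f be holomorphic on U^n with ‖f‖_p < ∞. Then for every z ∈ U^n, |f(z)| ≤ |f(0)| + (n/(1−p))·‖f‖_p. -/

import Mathlib

/-!
Restrict `f` to the segment `t ↦ t • z`, `t ∈ [0, 1]`. Expanding `z` in the coordinate basis, the
derivative of `t ↦ f (t • z)` is bounded by `n M (1 - t) ^ (-p)`, where `M` is the supremum in the
Bloch norm, because `1 - |t z_k|² ≥ 1 - t`. For `p < 1` this bound has a primitive that is
continuous on `[0, 1]` and increases by `n M / (1 - p)` there, and comparing `f (t • z) - f 0` with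
that primitive gives `|f z - f 0| ≤ n M / (1 - p)`.
-/

open Metric Set Filter

noncomputable section

def polydisc (n : ℕ) : Set (Fin n → ℂ) := {z | ∀ j, ‖z j‖ < 1}

def blochSum (n : ℕ) (p : ℝ) (f : (Fin n → ℂ) → ℂ) (z : Fin n → ℂ) : ℝ :=
  ∑ k : Fin n, ‖fderiv ℂ f z (Pi.single k 1)‖ * (1 - ‖z k‖ ^ 2) ^ p

def blochNorm (n : ℕ) (p : ℝ) (f : (Fin n → ℂ) → ℂ) : ℝ :=
  ‖f 0‖ + sSup (blochSum n p f '' polydisc n)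

def MemBloch (n : ℕ) (p : ℝ) (f : (Fin n → ℂ) → ℂ) : Prop :=
  DifferentiableOn ℂ f (polydisc n) ∧ BddAbove (blochSum n p f '' polydisc n)

def IsPolyFn (n : ℕ) (g : (Fin n → ℂ) → ℂ) : Prop :=
  ∃ P : MvPolynomial (Fin n) ℂ, ∀ z, g z = MvPolynomial.eval z P

def MemLittleBloch (n : ℕ) (p : ℝ) (f : (Fin n → ℂ) → ℂ) : Prop :=
  MemBloch n p f ∧ ∀ ε : ℝ, 0 < ε →
    ∃ g, IsPolyFn n g ∧ blochNorm n p (fun z => f z - g z) < ε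

def MemLittleStarBloch (n : ℕ) (p : ℝ) (f : (Fin n → ℂ) → ℂ) : Prop :=
  MemBloch n p f ∧ ∀ z : ℕ → Fin n → ℂ, (∀ j, z j ∈ polydisc n) →
    (∀ k, Tendsto (fun j => ‖z j k‖) atTop (nhds 1)) →
    Tendsto (fun j => blochSum n p f (z j)) atTop (nhds 0)

def HoloSelfMap (n : ℕ) (φ : (Fin n → ℂ) → Fin n → ℂ) : Prop :=
  DifferentiableOn ℂ φ (polydisc n) ∧ ∀ z ∈ polydisc n, φ z ∈ polydisc n

def compSum (n : ℕ) (p q : ℝ) (φ : (Fin n → ℂ) → Fin n → ℂ) (z : Fin n → ℂ) : ℝ :=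
  ∑ k : Fin n, ∑ l : Fin n, ‖fderiv ℂ φ z (Pi.single k 1) l‖ *
    ((1 - ‖z k‖ ^ 2) ^ q / (1 - ‖φ z l‖ ^ 2) ^ p)

theorem ContinuousLinearMap.norm_apply_le_sum_norm_mul_norm_apply_single {𝕜 E ι : Type*}
    [NontriviallyNormedField 𝕜] [NormedAddCommGroup E] [NormedSpace 𝕜 E] [Fintype ι]
    [DecidableEq ι] (L : (ι → 𝕜) →L[𝕜] E) (v : ι → 𝕜) :
    ‖L v‖ ≤ ∑ k, ‖v k‖ * ‖L (Pi.single k 1)‖ := by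
  conv_lhs => rw [pi_eq_sum_univ' v, map_sum]
  refine (norm_sum_le _ _).trans_eq (Finset.sum_congr rfl fun k _ => ?_)
  rw [map_smul, norm_smul]

theorem norm_sub_le_of_norm_deriv_le_mul_one_sub_rpow_neg {E : Type*} [NormedAddCommGroup E]
    [NormedSpace ℝ E] {g g' : ℝ → E} {C p : ℝ} (hp : p < 1) (hg : ContinuousOn g (Icc 0 1))
    (hg' : ∀ t ∈ Ico (0 : ℝ) 1, HasDerivAt g (g' t) t)
    (bound : ∀ t ∈ Ico (0 : ℝ) 1, ‖g' t‖ ≤ C * (1 - t) ^ (-p)) :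
    ‖g 1 - g 0‖ ≤ C / (1 - p) := by
  -- `B` is an antiderivative of the bound `C (1 - t) ^ (-p)` vanishing at `0`.
  set B : ℝ → ℝ := fun t => C * (1 - (1 - t) ^ (1 - p)) / (1 - p)
  have hB : ∀ t ∈ Ico (0 : ℝ) 1, HasDerivAt B (C * (1 - t) ^ (-p)) t := by
    intro t ht
    have h := ((((hasDerivAt_id' t).const_sub 1).rpow_const (p := 1 - p)
      (Or.inl (sub_pos.2 ht.2).ne')).const_sub 1 |>.const_mul C).div_const (1 - p)
    refine h.congr_deriv ?_
    rw [show 1 - p - 1 = -p by ring]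
    field_simp [(sub_pos.2 hp).ne']
  have := image_norm_le_of_norm_deriv_right_le_deriv_boundary' (f := fun t => g t - g 0)
    (hg.sub continuousOn_const) (fun t ht => ((hg' t ht).sub_const (g 0)).hasDerivWithinAt)
    (B := B) (by simp [B]) ?_ (fun t ht => (hB t ht).hasDerivWithinAt) bound
    (right_mem_Icc.2 zero_le_one)
  · simpa [B, Real.zero_rpow (sub_pos.2 hp).ne'] using this
  · exact Continuous.continuousOn <| by
      have : Continuous fun t : ℝ => (1 - t) ^ (1 - p) :=
        (continuous_const.sub continuous_id).rpow_const fun _ => Or.inr (sub_pos.2 hp).le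
      fun_prop

theorem isOpen_polydisc (n : ℕ) : IsOpen (polydisc n) := by
  simp only [polydisc, ofPred_forall]
  exact isOpen_iInter_of_finite fun j => isOpen_lt (continuous_apply j).norm continuous_const

theorem smul_mem_polydisc {n : ℕ} {z : Fin n → ℂ} (hz : z ∈ polydisc n) {c : ℂ} (hc : ‖c‖ ≤ 1) :
    c • z ∈ polydisc n := fun j => by
  rw [Pi.smul_apply, norm_smul]
  exact (mul_le_of_le_one_left (norm_nonneg _) hc).trans_lt (hz j)

theorem norm_fderiv_single_mul_le_sSup {n : ℕ} {p : ℝ} {f : (Fin n → ℂ) → ℂ}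
    (hf : BddAbove (blochSum n p f '' polydisc n)) {w : Fin n → ℂ} (hw : w ∈ polydisc n)
    (k : Fin n) :
    ‖fderiv ℂ f w (Pi.single k 1)‖ * (1 - ‖w k‖ ^ 2) ^ p ≤ sSup (blochSum n p f '' polydisc n) := by
  refine le_trans ?_ (le_csSup hf (mem_image_of_mem _ hw))
  refine Finset.single_le_sum (f := fun l => ‖fderiv ℂ f w (Pi.single l 1)‖ * (1 - ‖w l‖ ^ 2) ^ p)
    (fun l _ => ?_) (Finset.mem_univ k)
  have : ‖w l‖ ^ 2 < 1 := pow_lt_one₀ (norm_nonneg _) (hw l) two_ne_zero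
  exact mul_nonneg (norm_nonneg _) (Real.rpow_nonneg (sub_nonneg.2 this.le) _)

theorem norm_fderiv_ofReal_smul_apply_le {n : ℕ} {p : ℝ} {f : (Fin n → ℂ) → ℂ}
    (hf : BddAbove (blochSum n p f '' polydisc n)) (hp : 0 ≤ p) {z : Fin n → ℂ}
    (hz : z ∈ polydisc n) {t : ℝ} (ht : t ∈ Ico (0 : ℝ) 1) :
    ‖fderiv ℂ f ((t : ℂ) • z) z‖ ≤ n * sSup (blochSum n p f '' polydisc n) * (1 - t) ^ (-p) := by
  set M := sSup (blochSum n p f '' polydisc n)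
  set w : Fin n → ℂ := (t : ℂ) • z
  have hw : w ∈ polydisc n := smul_mem_polydisc hz (by simpa [abs_of_nonneg ht.1] using ht.2.le)
  have h1t : 0 < 1 - t := sub_pos.2 ht.2
  have hpartial : ∀ k, ‖fderiv ℂ f w (Pi.single k 1)‖ ≤ M * (1 - t) ^ (-p) := fun k => by
    have hwk : ‖w k‖ ≤ t := by
      simpa [w, norm_mul, abs_of_nonneg ht.1] using
        mul_le_of_le_one_right ht.1 (hz k).le
    have hweight : (1 - t) ^ p ≤ (1 - ‖w k‖ ^ 2) ^ p := by
      refine Real.rpow_le_rpow h1t.le ?_ hp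
      nlinarith [hwk, norm_nonneg (w k), ht.1]
    rw [Real.rpow_neg h1t.le, ← div_eq_mul_inv, le_div_iff₀ (Real.rpow_pos_of_pos h1t p)]
    exact (mul_le_mul_of_nonneg_left hweight (norm_nonneg _)).trans
      (norm_fderiv_single_mul_le_sSup hf hw k)
  calc ‖fderiv ℂ f w z‖ ≤ ∑ k, ‖z k‖ * ‖fderiv ℂ f w (Pi.single k 1)‖ :=
        (fderiv ℂ f w).norm_apply_le_sum_norm_mul_norm_apply_single z
    _ ≤ ∑ _k : Fin n, M * (1 - t) ^ (-p) := Finset.sum_le_sum fun k _ =>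
        (mul_le_of_le_one_left (norm_nonneg _) (hz k).le).trans (hpartial k)
    _ = n * M * (1 - t) ^ (-p) := by simp [mul_assoc]

theorem hasDerivAt_ofReal_smul {n : ℕ} {f : (Fin n → ℂ) → ℂ}
    (hf : DifferentiableOn ℂ f (polydisc n)) {z : Fin n → ℂ} (hz : z ∈ polydisc n) {t : ℝ}
    (ht : t ∈ Icc (0 : ℝ) 1) :
    HasDerivAt (fun s : ℝ => f ((s : ℂ) • z)) (fderiv ℂ f ((t : ℂ) • z) z) t := by
  have hw : (t : ℂ) • z ∈ polydisc n :=
    smul_mem_polydisc hz (by simpa [abs_of_nonneg ht.1] using ht.2)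
  have hf' := (hf.differentiableAt ((isOpen_polydisc n).mem_nhds hw)).hasFDerivAt
  have hline : HasDerivAt (fun c : ℂ => c • z) z t := by
    simpa using (hasDerivAt_id (t : ℂ)).smul_const z
  exact (hf'.comp_hasDerivAt _ hline).comp_ofReal

/-- Lemma 1 (1): growth estimate for functions in the p-Bloch space, 0 < p < 1. -/
theorem bloch_growth_lt_one (n : ℕ) (p : ℝ) (hp0 : 0 < p) (hp1 : p < 1)
    (f : (Fin n → ℂ) → ℂ) (hf : MemBloch n p f) :
    ∀ z ∈ polydisc n,
      ‖f z‖ ≤ ‖f 0‖ + ((n : ℝ) / (1 - p)) * blochNorm n p f := by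
  intro z hz
  obtain ⟨hdiff, hbdd⟩ := hf
  set M := sSup (blochSum n p f '' polydisc n)
  have hray := fun t (ht : t ∈ Icc (0 : ℝ) 1) => hasDerivAt_ofReal_smul hdiff hz ht
  have hincr : ‖f z - f 0‖ ≤ n * M / (1 - p) := by
    simpa using norm_sub_le_of_norm_deriv_le_mul_one_sub_rpow_neg hp1
      (fun t ht => (hray t ht).continuousAt.continuousWithinAt)
      (fun t ht => hray t (Ico_subset_Icc_self ht))
      (fun t ht => norm_fderiv_ofReal_smul_apply_le hbdd hp0.le hz ht)
  have hM : M ≤ blochNorm n p f := le_add_of_nonneg_left (norm_nonneg _)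
  calc ‖f z‖ ≤ ‖f 0‖ + ‖f z - f 0‖ := norm_le_insert' _ _
    _ ≤ ‖f 0‖ + n / (1 - p) * M := by rw [div_mul_eq_mul_div]; gcongr
    _ ≤ ‖f 0‖ + n / (1 - p) * blochNorm n p f := by gcongr
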